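/- arXiv:math/9711211 — 3 statements merged into one kernel-verified Lean document; each statement's English description precedes it below -/
import Mathlib

section
/- Let 0 < λ ≤ 1/1000 and suppose |h₁| ≤ λ, |h₂| ≤ λ², 1/2 ≤ t < s ≤ 2, and s − t ≥ 15λ^{1/3}. With (s_h, t_h) defined by s_h = ½( h₁ + s − t + (h₂ + s² − t²)/(h₁ + s − t) ) and t_h = ½( t − s − h₁ + (h₂ + s² − t²)/(h₁ + s − t) ), one has |t − t_h| ≤ λ^{2/3} and |s − s_h| ≤ λ^{2/3}. -/
open Real

set_option maxHeartbeats 2000000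

theorem perturbation_estimate (lam h₁ h₂ s t : ℝ)
    (hlam : 0 < lam) (hlam' : lam ≤ 1 / 1000)
    (hh₁ : |h₁| ≤ lam) (hh₂ : |h₂| ≤ lam ^ 2)
    (ht : 1 / 2 ≤ t) (hts : t < s) (hs : s ≤ 2)
    (hsep : s - t ≥ 15 * lam ^ ((1 : ℝ) / 3)) :
    |t - (1 / 2) * (t - s - h₁ + (h₂ + s ^ 2 - t ^ 2) / (h₁ + s - t))| ≤ lam ^ ((2 : ℝ) / 3) ∧
    |s - (1 / 2) * (h₁ + s - t + (h₂ + s ^ 2 - t ^ 2) / (h₁ + s - t))| ≤ lam ^ ((2 : ℝ) / 3) := by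
  set u := lam ^ ((1 : ℝ) / 3) with hu
  have hu0 : 0 < u := Real.rpow_pos_of_pos hlam _
  have hcube : u ^ 3 = lam := by
    rw [hu, ← Real.rpow_natCast (lam ^ ((1 : ℝ) / 3)) 3, ← Real.rpow_mul hlam.le]
    norm_num
  have hsq : lam ^ ((2 : ℝ) / 3) = u ^ 2 := by
    rw [hu, ← Real.rpow_natCast (lam ^ ((1 : ℝ) / 3)) 2, ← Real.rpow_mul hlam.le]
    norm_num
  clear_value u
  have hu1 : u ≤ 1 / 10 := by nlinarith [hcube, hu0]
  have h1 := abs_le.mp hh₁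
  have h2 := abs_le.mp hh₂
  have hlu : lam ≤ u := by nlinarith
  have hd : h₁ + s - t ≥ 14 * u := by nlinarith
  have hd0 : 0 < h₁ + s - t := by nlinarith
  have hl2 : lam ^ 2 ≤ lam := by nlinarith
  have hh1sq : h₁ ^ 2 ≤ lam ^ 2 := by nlinarith [h1.1, h1.2]
  have hsh_up : s * h₁ ≤ 4 * lam := by nlinarith [mul_nonneg (by linarith : (0:ℝ) ≤ 2 - s) (by linarith : (0:ℝ) ≤ lam + h₁)]
  have hsh_lo : -(4 * lam) ≤ s * h₁ := by nlinarith [mul_nonneg (by linarith : (0:ℝ) ≤ 2 - s) (by linarith : (0:ℝ) ≤ lam - h₁)]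
  have hth_up : t * h₁ ≤ 4 * lam := by nlinarith [mul_nonneg (by linarith : (0:ℝ) ≤ 2 - t) (by linarith : (0:ℝ) ≤ lam + h₁)]
  have hth_lo : -(4 * lam) ≤ t * h₁ := by nlinarith [mul_nonneg (by linarith : (0:ℝ) ≤ 2 - t) (by linarith : (0:ℝ) ≤ lam - h₁)]
  have hA : 28 * u ^ 3 ≤ u ^ 2 * (2 * (h₁ + s - t)) := by
    nlinarith [mul_le_mul_of_nonneg_left hd (sq_nonneg u)]
  constructor
  · have heq : t - (1 / 2) * (t - s - h₁ + (h₂ + s ^ 2 - t ^ 2) / (h₁ + s - t))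
        = (h₁ ^ 2 + 2 * s * h₁ - h₂) / (2 * (h₁ + s - t)) := by
      field_simp
      ring
    rw [heq, hsq, abs_div, abs_of_pos (by linarith : (0:ℝ) < 2 * (h₁ + s - t)),
      div_le_iff₀ (by linarith)]
    rw [abs_le]
    constructor <;> nlinarith [hcube]
  · have heq : s - (1 / 2) * (h₁ + s - t + (h₂ + s ^ 2 - t ^ 2) / (h₁ + s - t))
        = (2 * t * h₁ - h₁ ^ 2 - h₂) / (2 * (h₁ + s - t)) := by
      field_simp
      ring
    rw [heq, hsq, abs_div, abs_of_pos (by linarith : (0:ℝ) < 2 * (h₁ + s - t)),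
      div_le_iff₀ (by linarith)]
    rw [abs_le]
    constructor <;> nlinarith [hcube]
end

section
/- Let 0 < λ ≤ 1/1000, let E_λ = {(s,t) : s − t ≥ 15λ^{1/3}, 1/2 ≤ t < s ≤ 2}, and let (s_h,t_h) be as above for |h₁| ≤ λ, |h₂| ≤ λ². Then ∬_{E_λ} |1/(s−t) − 1/(s_h−t_h)| (s−t) ds dt ≤ C λ^{1/3} for an absolute constant C. -/
open MeasureTheory Real

/-!
The `h₂`-terms cancel in `s_h - t_h`, which is just `s - t + h₁`, so the integrand is
`|h₁| / (s - t + h₁)`. On `E_λ` the denominator is at least `λ^{1/3}` while `|h₁| ≤ λ ≤ λ^{2/3}`,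
so the integrand is at most `λ^{1/3}` pointwise; and `E_λ` lies in the square `[1/2, 2]²`.
-/

lemma abs_one_div_sub_one_div_add_mul_le {a d h : ℝ} (ha : 0 < a) (hd : a + |h| ≤ d)
    (hh : |h| ≤ a ^ 2) : |1 / d - 1 / (d + h)| * d ≤ a := by
  have hdh : a ≤ d + h := by linarith [neg_abs_le h]
  have hd0 : 0 < d := by linarith [abs_nonneg h]
  have hdh0 : 0 < d + h := ha.trans_le hdh
  have hdiff : (1 / d - 1 / (d + h)) * d = h / (d + h) := by
    field_simp
    ring
  rw [← abs_of_pos hd0, ← abs_mul, abs_of_pos hd0, hdiff, abs_div, abs_of_pos hdh0,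
    div_le_iff₀ hdh0]
  calc |h| ≤ a * a := by rwa [← sq]
    _ ≤ a * (d + h) := by gcongr

lemma volume_lt_top_and_real_le_of_subset_Icc_prod {S : Set (ℝ × ℝ)} {a b : ℝ} (hab : a ≤ b)
    (hS : S ⊆ Set.Icc a b ×ˢ Set.Icc a b) : volume S < ⊤ ∧ volume.real S ≤ (b - a) ^ 2 := by
  have hbox : volume (Set.Icc a b ×ˢ Set.Icc a b) < ⊤ := by
    rw [Measure.volume_eq_prod, Measure.prod_prod, Real.volume_Icc]
    exact ENNReal.mul_lt_top ENNReal.ofReal_lt_top ENNReal.ofReal_lt_top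
  refine ⟨(measure_mono hS).trans_lt hbox, ?_⟩
  calc volume.real S ≤ volume.real (Set.Icc a b ×ˢ Set.Icc a b) := measureReal_mono hS hbox.ne
    _ = (b - a) ^ 2 := by
      rw [Measure.volume_eq_prod, measureReal_prod_prod, Real.volume_real_Icc_of_le hab, sq]

theorem jacobian_difference_integral_bound :
    ∃ C > 0, ∀ lam h₁ h₂ : ℝ, 0 < lam → lam ≤ 1 / 1000 →
      |h₁| ≤ lam → |h₂| ≤ lam ^ 2 →
      (∫ p in {p : ℝ × ℝ | p.1 - p.2 ≥ 15 * lam ^ ((1 : ℝ) / 3) ∧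
          1 / 2 ≤ p.2 ∧ p.2 < p.1 ∧ p.1 ≤ 2},
        |1 / (p.1 - p.2) -
          1 / (((1 / 2) * (h₁ + p.1 - p.2 + (h₂ + p.1 ^ 2 - p.2 ^ 2) / (h₁ + p.1 - p.2))) -
               ((1 / 2) * (p.2 - p.1 - h₁ + (h₂ + p.1 ^ 2 - p.2 ^ 2) / (h₁ + p.1 - p.2))))| *
          (p.1 - p.2)) ≤ C * lam ^ ((1 : ℝ) / 3) := by
  refine ⟨9 / 4, by norm_num, fun lam h₁ h₂ hlam hlam_le hh₁ _ => ?_⟩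
  set a := lam ^ ((1 : ℝ) / 3)
  have ha : 0 < a := rpow_pos_of_pos hlam _
  have ha_le : a ≤ 1 := rpow_le_one hlam.le (by linarith) (by norm_num)
  have hh₁a : |h₁| ≤ a ^ 2 := by
    have hcube : a ^ 3 = lam := by
      rw [← rpow_natCast, ← rpow_mul hlam.le]
      norm_num
    calc |h₁| ≤ a ^ 3 := hcube ▸ hh₁
      _ ≤ a ^ 2 := pow_le_pow_of_le_one ha.le ha_le (by norm_num)
  obtain ⟨hfin, hvol⟩ := volume_lt_top_and_real_le_of_subset_Icc_prod (S :=
    {p : ℝ × ℝ | p.1 - p.2 ≥ 15 * a ∧ 1 / 2 ≤ p.2 ∧ p.2 < p.1 ∧ p.1 ≤ 2}) (by norm_num)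
    fun p ⟨_, ht, _, hs⟩ => ⟨⟨by linarith, hs⟩, ⟨ht, by linarith⟩⟩
  refine (le_norm_self _).trans <| (norm_setIntegral_le_of_norm_le_const (C := a) hfin ?_).trans ?_
  · rintro ⟨s, t⟩ ⟨hst, -, -, -⟩
    have hden : (1 / 2) * (h₁ + s - t + (h₂ + s ^ 2 - t ^ 2) / (h₁ + s - t)) -
        (1 / 2) * (t - s - h₁ + (h₂ + s ^ 2 - t ^ 2) / (h₁ + s - t)) = s - t + h₁ := by ring
    have hst₀ : 0 ≤ s - t := by linarith
    dsimp only
    rw [hden, norm_of_nonneg (by positivity)]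
    have hsq : a ^ 2 ≤ a := pow_le_of_le_one ha.le ha_le two_ne_zero
    exact abs_one_div_sub_one_div_add_mul_le ha (by linarith) hh₁a
  · nlinarith
end

section
/- The change of variables x₁ = ρσ₁, x₂ = ρ²σ₂, mapping (0,∞) × S¹ → ℝ² \ {0} (with (σ₁,σ₂) ∈ S¹), has Jacobian ρ²(1 + σ₂²) with respect to the measure dρ dσ, i.e., for f ∈ L¹(ℝ²), ∫_{ℝ²} f(x) dx = ∫_{S¹} ∫₀^∞ f(ρσ₁, ρ²σ₂) ρ² (1 + σ₂²) dρ dσ. -/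
/-!
With `t = ρ ^ 2`, the equations `x₁ = ρ cos θ`, `x₂ = ρ ^ 2 sin θ` force `t ^ 2 = x₁ ^ 2 t + x₂ ^ 2`,
a quadratic with exactly one positive root when `x ≠ 0`. This determines `ρ`, after which
`(x₁ / ρ, x₂ / ρ ^ 2)` is a point of the unit circle and determines `θ ∈ [0, 2π)`. Hence
`(θ, ρ) ↦ (ρ cos θ, ρ ^ 2 sin θ)` maps `[0, 2π) × (0, ∞)` bijectively onto the complement of the
null set `{0}`, with Jacobian determinant `-ρ ^ 2 (1 + sin θ ^ 2)`, and the change of variables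
formula applies.
-/

open MeasureTheory Real Set

theorem eq_of_sq_eq_mul_add {a b t t' : ℝ} (hb : 0 ≤ b) (ht : 0 < t) (ht' : 0 < t')
    (h : t ^ 2 = a * t + b) (h' : t' ^ 2 = a * t' + b) : t = t' := by
  have hat : a ≤ t := by nlinarith
  have : (t - t') * (t + t' - a) = 0 := by linear_combination h - h'
  rcases mul_eq_zero.1 this with h | h <;> linarith

theorem exists_pos_sq_eq_mul_add {a b : ℝ} (ha : 0 ≤ a) (hb : 0 ≤ b) (hab : 0 < a ∨ 0 < b) :
    ∃ t > 0, t ^ 2 = a * t + b := by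
  have hd : 0 ≤ a ^ 2 + 4 * b := by positivity
  refine ⟨(a + √(a ^ 2 + 4 * b)) / 2, ?_, ?_⟩
  · rcases hab with h | h
    · positivity
    · have := Real.sqrt_pos.2 (by positivity : 0 < a ^ 2 + 4 * b)
      positivity
  · linear_combination Real.sq_sqrt hd / 4

theorem injOn_cos_sin : InjOn (fun θ : ℝ => (cos θ, sin θ)) (Ico 0 (2 * π)) := by
  intro θ hθ θ' hθ' h
  simp only [Prod.mk.injEq] at h
  refine Circle.exp_injOn_Ico (by linarith) hθ hθ' (Circle.ext (Complex.ext ?_ ?_))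
  · simp [Circle.coe_exp, Complex.exp_ofReal_mul_I_re, h.1]
  · simp [Circle.coe_exp, Complex.exp_ofReal_mul_I_im, h.2]

theorem exists_mem_Ico_cos_sin_eq {x y : ℝ} (h : x ^ 2 + y ^ 2 = 1) :
    ∃ θ ∈ Ico 0 (2 * π), cos θ = x ∧ sin θ = y := by
  set z : ℂ := ⟨x, y⟩
  have hz : ‖z‖ = 1 := by
    rw [Complex.norm_def, Complex.normSq_mk, ← sq, ← sq, h, Real.sqrt_one]
  have hperiodic : Function.Periodic (fun θ : ℝ => (cos θ, sin θ)) (2 * π) := fun θ => by simp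
  obtain ⟨θ, hθ, hθz⟩ := hperiodic.exists_mem_Ico₀ two_pi_pos (Complex.arg z)
  simp only [Prod.mk.injEq] at hθz
  refine ⟨θ, hθ, ?_, ?_⟩
  · simpa [← hθz.1, hz] using Complex.norm_mul_cos_arg z
  · simpa [← hθz.2, hz] using Complex.norm_mul_sin_arg z

noncomputable def parabolicPolar (p : ℝ × ℝ) : ℝ × ℝ := (p.2 * cos p.1, p.2 ^ 2 * sin p.1)

noncomputable def fderivParabolicPolar (p : ℝ × ℝ) : ℝ × ℝ →L[ℝ] ℝ × ℝ :=
  (Matrix.toLin (.finTwoProd ℝ) (.finTwoProd ℝ)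
    !![-p.2 * sin p.1, cos p.1; p.2 ^ 2 * cos p.1, 2 * p.2 * sin p.1]).toContinuousLinearMap

theorem hasFDerivAt_parabolicPolar (p : ℝ × ℝ) :
    HasFDerivAt parabolicPolar (fderivParabolicPolar p) p := by
  unfold fderivParabolicPolar
  rw [Matrix.toLin_finTwoProd_toContinuousLinearMap]
  refine (HasFDerivAt.prodMk
    (hasFDerivAt_snd.mul ((hasDerivAt_cos p.1).comp_hasFDerivAt p hasFDerivAt_fst))
    ((hasFDerivAt_snd.pow 2).mul
      ((hasDerivAt_sin p.1).comp_hasFDerivAt p hasFDerivAt_fst))).congr_fderiv ?_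
  ext <;> simp [mul_comm]

theorem abs_det_fderivParabolicPolar (p : ℝ × ℝ) :
    |(fderivParabolicPolar p).det| = p.2 ^ 2 * (1 + sin p.1 ^ 2) := by
  have hdet : (fderivParabolicPolar p).det = -(p.2 ^ 2 * (1 + sin p.1 ^ 2)) := by
    simp only [fderivParabolicPolar, LinearMap.det_toContinuousLinearMap, LinearMap.det_toLin,
      Matrix.det_fin_two_of]
    linear_combination -p.2 ^ 2 * sin_sq_add_cos_sq p.1
  rw [hdet, abs_neg, abs_of_nonneg (by positivity)]

theorem sq_sq_eq_parabolicPolar (θ ρ : ℝ) :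
    (ρ ^ 2) ^ 2 = (parabolicPolar (θ, ρ)).1 ^ 2 * ρ ^ 2 + (parabolicPolar (θ, ρ)).2 ^ 2 := by
  simp only [parabolicPolar]
  linear_combination -ρ ^ 4 * sin_sq_add_cos_sq θ

theorem injOn_parabolicPolar : InjOn parabolicPolar (Ico 0 (2 * π) ×ˢ Ioi 0) := by
  rintro ⟨θ, ρ⟩ ⟨hθ, hρ : 0 < ρ⟩ ⟨θ', ρ'⟩ ⟨hθ', hρ' : 0 < ρ'⟩ h
  have hρρ' : ρ = ρ' := by
    refine (pow_left_inj₀ hρ.le hρ'.le two_ne_zero).1 ?_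
    refine eq_of_sq_eq_mul_add (sq_nonneg _) (by positivity) (by positivity)
      (sq_sq_eq_parabolicPolar θ ρ) ?_
    rw [h]
    exact sq_sq_eq_parabolicPolar θ' ρ'
  subst hρρ'
  simp only [parabolicPolar, Prod.mk.injEq, mul_right_inj' hρ.ne',
    mul_right_inj' (pow_pos hρ 2).ne'] at h
  exact Prod.ext (injOn_cos_sin hθ hθ' (Prod.ext h.1 h.2)) rfl

theorem surjOn_parabolicPolar : SurjOn parabolicPolar (Ico 0 (2 * π) ×ˢ Ioi 0) {0}ᶜ := by
  rintro ⟨a, b⟩ hab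
  have hab' : 0 < a ^ 2 ∨ 0 < b ^ 2 := by
    have : a ≠ 0 ∨ b ≠ 0 := by
      contrapose! hab
      simp [hab]
    exact this.imp (fun _ => by positivity) (fun _ => by positivity)
  obtain ⟨t, ht, hquad⟩ := exists_pos_sq_eq_mul_add (sq_nonneg a) (sq_nonneg b) hab'
  have hρ : 0 < √t := sqrt_pos.2 ht
  have hρt : √t ^ 2 = t := sq_sqrt ht.le
  obtain ⟨θ, hθ, hcos, hsin⟩ := exists_mem_Ico_cos_sin_eq (x := a / √t) (y := b / √t ^ 2) (by
    rw [div_pow, div_pow, hρt, div_add_div _ _ ht.ne' (by positivity),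
      div_eq_one_iff_eq (by positivity)]
    linear_combination -hquad * t)
  refine ⟨(θ, √t), ⟨hθ, hρ⟩, ?_⟩
  simp only [parabolicPolar, hcos, hsin]
  congr 1 <;> field_simp

theorem parabolicPolar_image_ae_eq_univ :
    parabolicPolar '' (Ico 0 (2 * π) ×ˢ Ioi 0) =ᵐ[volume] univ :=
  ae_eq_univ.2 (measure_mono_null (compl_subset_comm.1 surjOn_parabolicPolar) (measure_singleton 0))

section

variable {E : Type*} [NormedAddCommGroup E] [NormedSpace ℝ E]

theorem integrable_iff_integrableOn_parabolicPolar (f : ℝ × ℝ → E) :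
    Integrable f ↔ IntegrableOn (fun p => (p.2 ^ 2 * (1 + sin p.1 ^ 2)) • f (parabolicPolar p))
      (Ico 0 (2 * π) ×ˢ Ioi 0) := by
  simp_rw [← abs_det_fderivParabolicPolar, ← integrableOn_univ,
    ← integrableOn_congr_set_ae parabolicPolar_image_ae_eq_univ]
  exact integrableOn_image_iff_integrableOn_abs_det_fderiv_smul volume
    (measurableSet_Ico.prod measurableSet_Ioi)
    (fun p _ => (hasFDerivAt_parabolicPolar p).hasFDerivWithinAt) injOn_parabolicPolar f

theorem integral_comp_parabolicPolar (f : ℝ × ℝ → E) :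
    ∫ p in Ico 0 (2 * π) ×ˢ Ioi 0, (p.2 ^ 2 * (1 + sin p.1 ^ 2)) • f (parabolicPolar p) =
      ∫ x, f x := by
  calc _ = ∫ x in parabolicPolar '' (Ico 0 (2 * π) ×ˢ Ioi 0), f x := by
        simp_rw [← abs_det_fderivParabolicPolar]
        exact (integral_image_eq_integral_abs_det_fderiv_smul volume
          (measurableSet_Ico.prod measurableSet_Ioi)
          (fun p _ => (hasFDerivAt_parabolicPolar p).hasFDerivWithinAt) injOn_parabolicPolar f).symm
    _ = ∫ x, f x := (setIntegral_congr_set parabolicPolar_image_ae_eq_univ).trans setIntegral_univ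

end

theorem parabolic_polar_coordinates (f : ℝ × ℝ → ℝ) (hf : Integrable f) :
    ∫ x : ℝ × ℝ, f x =
      ∫ θ in Set.Ico 0 (2 * Real.pi), ∫ ρ in Set.Ioi (0 : ℝ),
        f (ρ * Real.cos θ, ρ ^ 2 * Real.sin θ) * ρ ^ 2 * (1 + Real.sin θ ^ 2) := by
  have hint := (integrable_iff_integrableOn_parabolicPolar f).1 hf
  rw [Measure.volume_eq_prod] at hint
  rw [← integral_comp_parabolicPolar, Measure.volume_eq_prod, setIntegral_prod _ hint]
  simp_rw [parabolicPolar, smul_eq_mul, mul_comm _ (f _), ← mul_assoc]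
end
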